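/- arXiv:1809.03996 — 3 statements merged into one kernel-verified Lean document; each statement's English description precedes it below -/
import Mathlib

section
/- Let n ∈ ℕ, P ⊆ [n] × [n], and let V = {Σ_{(i,j)∈P} ω_{ij} E_{ij} : ω_{ij} ≥ 0} be the cone of entrywise-nonnegative n×n matrices supported on P. Let ψ : V → ℝ be convex and positively homogeneous, and for given real numbers α_{ij} (i, j ∈ [n]) define f : V → ℝ by f(A) = Σ_{j∈[n]} Σ_{i∈[n]} α_{ij} · r^i_{↓j}, where r^i is the i-th row of A and r^i_{↓j} is the j-th largest entry of r^i. Then the following are equivalent: (1) ψ(A) ≤ f(A) for every A ∈ V; (2) ψ(A) ≤ f(A) for every A ∈ V all of whose entries lie in {0, 1}. -/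
/-- The `j`-th largest entry of the tuple `x` (indices starting from `0`,
so `downOrd x 0` is the largest entry). -/
noncomputable def downOrd {p : ℕ} (x : Fin p → ℝ) (j : Fin p) : ℝ :=
  x (Tuple.sort x j.rev)

lemma downOrd_comp {p : ℕ} {g : ℝ → ℝ} (hg : Monotone g) (x : Fin p → ℝ) (j : Fin p) :
    downOrd (g ∘ x) j = g (downOrd x j) := by
  have h : (g ∘ x) ∘ (Tuple.sort x : Equiv.Perm (Fin p)) = (g ∘ x) ∘ Tuple.sort (g ∘ x) := by
    rw [Tuple.comp_sort_eq_comp_iff_monotone]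
    exact hg.comp (Tuple.monotone_sort x)
  exact (congrFun h j.rev).symm

theorem matrix_convex_bound_iff_on_zero_one_matrices_rows {n : ℕ}
    (P : Finset (Fin n × Fin n))
    (V : Set (Matrix (Fin n) (Fin n) ℝ))
    (hV : V = {A | (∀ p : Fin n × Fin n, p ∉ P → A p.1 p.2 = 0) ∧
      ∀ i j, 0 ≤ A i j})
    (ψ : Matrix (Fin n) (Fin n) ℝ → ℝ)
    (hψconv : ConvexOn ℝ V ψ)
    (hψhom : ∀ α : ℝ, 0 < α → ∀ A ∈ V, ψ (α • A) = α * ψ A)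
    (α : Fin n → Fin n → ℝ)
    (f : Matrix (Fin n) (Fin n) ℝ → ℝ)
    (hf : ∀ A, f A = ∑ j : Fin n, ∑ i : Fin n, α i j * downOrd (A i) j) :
    (∀ A ∈ V, ψ A ≤ f A) ↔
      (∀ A ∈ V, (∀ i j, A i j = 0 ∨ A i j = 1) → ψ A ≤ f A) := by
  constructor
  · exact fun h A hA _ => h A hA
  intro h
  have hmem : ∀ A : Matrix (Fin n) (Fin n) ℝ, A ∈ V ↔
      ((∀ p : Fin n × Fin n, p ∉ P → A p.1 p.2 = 0) ∧ ∀ i j, 0 ≤ A i j) := by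
    intro A; rw [hV]; rfl
  -- subadditivity of ψ on V
  have hsub : ∀ X ∈ V, ∀ Y ∈ V, ψ (X + Y) ≤ ψ X + ψ Y := by
    intro X hX Y hY
    have hX' := (hmem X).1 hX
    have hY' := (hmem Y).1 hY
    have hM : (1/2 : ℝ) • X + (1/2 : ℝ) • Y ∈ V := by
      rw [hmem]
      refine ⟨fun p hp => ?_, fun i j => ?_⟩
      · simp [Matrix.add_apply, Matrix.smul_apply, hX'.1 p hp, hY'.1 p hp]
      · simp only [Matrix.add_apply, Matrix.smul_apply, smul_eq_mul]
        have := hX'.2 i j; have := hY'.2 i j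
        linarith
    have h2 := hψhom 2 (by norm_num) _ hM
    have hXY : (2:ℝ) • ((1/2:ℝ) • X + (1/2:ℝ) • Y) = X + Y := by
      rw [smul_add, smul_smul, smul_smul]; norm_num
    have hc := hψconv.2 hX hY (by norm_num : (0:ℝ) ≤ 1/2) (by norm_num : (0:ℝ) ≤ 1/2)
      (by norm_num : (1/2:ℝ) + 1/2 = 1)
    simp only [smul_eq_mul] at hc
    calc ψ (X + Y) = 2 * ψ ((1/2:ℝ) • X + (1/2:ℝ) • Y) := by rw [← hXY, h2]
    _ ≤ 2 * ((1/2) * ψ X + (1/2) * ψ Y) := by linarith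
    _ = ψ X + ψ Y := by ring
  -- the set of positive values of A
  have key : ∀ m : ℕ, ∀ A ∈ V,
      ((Finset.univ.image (fun p : Fin n × Fin n => A p.1 p.2)).filter (fun v => 0 < v)).card = m →
      ψ A ≤ f A := by
    intro m
    induction m using Nat.strong_induction_on with
    | _ m ih =>
    intro A hA hcard
    have hA' := (hmem A).1 hA
    set S : Finset ℝ :=
      (Finset.univ.image (fun p : Fin n × Fin n => A p.1 p.2)).filter (fun v => 0 < v) with hSdef
    rcases S.eq_empty_or_nonempty with hSe | hSne
    · -- all entries of A are zero
      have hzero : ∀ i j, A i j = 0 := by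
        intro i j
        rcases (hA'.2 i j).lt_or_eq with hlt | heq
        · exfalso
          have : A i j ∈ S := by
            rw [hSdef]
            simp only [Finset.mem_filter, Finset.mem_image]
            exact ⟨⟨(i, j), Finset.mem_univ _, rfl⟩, hlt⟩
          rw [hSe] at this; exact absurd this (Finset.notMem_empty _)
        · exact heq.symm
      exact h A hA (fun i j => Or.inl (hzero i j))
    · -- c = minimal positive entry
      set c : ℝ := S.min' hSne with hcdef
      have hcS : c ∈ S := S.min'_mem hSne
      have hcpos : 0 < c := by
        have := Finset.mem_filter.1 hcS
        exact this.2
      have hentry : ∀ i j, A i j = 0 ∨ c ≤ A i j := by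
        intro i j
        rcases (hA'.2 i j).lt_or_eq with hlt | heq
        · right
          refine S.min'_le _ ?_
          simp only [hSdef, Finset.mem_filter, Finset.mem_image]
          exact ⟨⟨(i, j), Finset.mem_univ _, rfl⟩, hlt⟩
        · exact Or.inl heq.symm
      set B : Matrix (Fin n) (Fin n) ℝ := fun i j => if 0 < A i j then 1 else 0 with hBdef
      have hB01 : ∀ i j, B i j = 0 ∨ B i j = 1 := by
        intro i j; by_cases hp : 0 < A i j <;> simp [hBdef, hp]
      have hBV : B ∈ V := by
        rw [hmem]
        refine ⟨fun p hp => ?_, fun i j => ?_⟩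
        · simp [hBdef, hA'.1 p hp]
        · rcases hB01 i j with h0 | h0 <;> simp [h0]
      set A' : Matrix (Fin n) (Fin n) ℝ := A - c • B with hA'def
      have hA'entry : ∀ i j, A' i j = A i j - c * B i j := by
        intro i j; simp [hA'def, Matrix.sub_apply, Matrix.smul_apply, smul_eq_mul]
      have hA'V : A' ∈ V := by
        rw [hmem]
        refine ⟨fun p hp => ?_, fun i j => ?_⟩
        · rw [hA'entry, hA'.1 p hp]
          simp [hBdef, hA'.1 p hp]
        · rw [hA'entry]
          rcases hentry i j with h0 | hc
          · simp [hBdef, h0]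
          · have : B i j = 1 := by simp [hBdef, lt_of_lt_of_le hcpos hc]
            rw [this]; linarith
      -- monotone functions for the layer decomposition
      set g₁ : ℝ → ℝ := fun t => max 0 (min t c) with hg₁def
      set g₂ : ℝ → ℝ := fun t => max 0 (t - c) with hg₂def
      have hg₁mono : Monotone g₁ := fun a b hab =>
        max_le_max le_rfl (min_le_min hab le_rfl)
      have hg₂mono : Monotone g₂ := fun a b hab =>
        max_le_max le_rfl (by linarith)
      have hg₁row : ∀ i, g₁ ∘ A i = fun l => c * B i l := by
        intro i; funext l
        rcases hentry i l with h0 | hc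
        · simp [hg₁def, hBdef, h0, hcpos.le, not_lt.2 hcpos.le]
        · have hpos : 0 < A i l := lt_of_lt_of_le hcpos hc
          simp [hg₁def, hBdef, hpos, min_eq_right hc, max_eq_right hcpos.le]
      have hg₂row : ∀ i, g₂ ∘ A i = A' i := by
        intro i; funext l
        rw [Function.comp_apply, hA'entry]
        rcases hentry i l with h0 | hc
        · simp [hg₂def, hBdef, h0, hcpos.le]
        · have hpos : 0 < A i l := lt_of_lt_of_le hcpos hc
          have : B i l = 1 := by simp [hBdef, hpos]
          rw [this]
          simp [hg₂def, max_eq_right (by linarith : (0:ℝ) ≤ A i l - c)]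
      have hrow : ∀ i j, downOrd (A i) j = c * downOrd (B i) j + downOrd (A' i) j := by
        intro i j
        set d : ℝ := downOrd (A i) j with hddef
        have hd : d = 0 ∨ c ≤ d := hentry i _
        have h1 : downOrd (fun l => c * B i l) j = g₁ d := by
          rw [← hg₁row i, downOrd_comp hg₁mono]
        have h2 : downOrd (A' i) j = g₂ d := by
          rw [← hg₂row i, downOrd_comp hg₂mono]
        have hcb : downOrd (fun l => c * B i l) j = c * downOrd (B i) j := by
          have : (fun l => c * B i l) = (fun t => c * t) ∘ B i := rfl
          rw [this, downOrd_comp (fun a b hab => mul_le_mul_of_nonneg_left hab hcpos.le)]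
        rw [← hcb, h1, h2]
        rcases hd with h0 | hc
        · simp [hg₁def, hg₂def, h0, hcpos.le, min_eq_left hcpos.le]
        · have : 0 ≤ d := le_trans hcpos.le hc
          rw [hg₁def, hg₂def]
          simp only
          rw [min_eq_right hc, max_eq_right hcpos.le,
            max_eq_right (by linarith : (0:ℝ) ≤ d - c)]
          ring
      -- f is additive along the decomposition
      have hfAdd : f A = c * f B + f A' := by
        rw [hf A, hf B, hf A', Finset.mul_sum, ← Finset.sum_add_distrib]
        refine Finset.sum_congr rfl fun j _ => ?_
        rw [Finset.mul_sum, ← Finset.sum_add_distrib]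
        refine Finset.sum_congr rfl fun i _ => ?_
        rw [hrow i j]; ring
      -- card decreases
      have hcardlt :
          ((Finset.univ.image (fun p : Fin n × Fin n => A' p.1 p.2)).filter (fun v => 0 < v)).card
            < m := by
        rw [← hcard]
        have hsubset : ∀ w ∈ (Finset.univ.image
            (fun p : Fin n × Fin n => A' p.1 p.2)).filter (fun v => 0 < v),
            w + c ∈ S.erase c := by
          intro w hw
          simp only [Finset.mem_filter, Finset.mem_image] at hw
          obtain ⟨⟨p, _, hpw⟩, hwpos⟩ := hw
          rw [hA'entry] at hpw
          rcases hentry p.1 p.2 with h0 | hcle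
          · exfalso
            have : B p.1 p.2 = 0 := by simp [hBdef, h0]
            rw [h0, this] at hpw; simp at hpw; linarith
          · have hB1 : B p.1 p.2 = 1 := by simp [hBdef, lt_of_lt_of_le hcpos hcle]
            rw [hB1, mul_one] at hpw
            have hwc : w + c = A p.1 p.2 := by linarith [hpw]
            refine Finset.mem_erase.2 ⟨by linarith, ?_⟩
            simp only [hSdef, Finset.mem_filter, Finset.mem_image]
            exact ⟨⟨p, Finset.mem_univ _, hwc.symm⟩, by linarith⟩
        calc ((Finset.univ.image (fun p : Fin n × Fin n => A' p.1 p.2)).filter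
              (fun v => 0 < v)).card
            ≤ (S.erase c).card :=
              Finset.card_le_card_of_injOn (fun w => w + c) hsubset
                (fun a _ b _ hab => by linarith [hab, add_left_injective c hab])
          _ < S.card := Finset.card_erase_lt_of_mem hcS
      -- put everything together
      have hcBV : c • B ∈ V := by
        rw [hmem]
        refine ⟨fun p hp => ?_, fun i j => ?_⟩
        · simp [Matrix.smul_apply, ((hmem B).1 hBV).1 p hp]
        · simp only [Matrix.smul_apply, smul_eq_mul]
          exact mul_nonneg hcpos.le (((hmem B).1 hBV).2 i j)
      have hsplit : A = c • B + A' := by rw [hA'def]; abel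
      have hψB := h B hBV hB01
      have hψA' := ih _ hcardlt A' hA'V rfl
      calc ψ A = ψ (c • B + A') := by rw [← hsplit]
        _ ≤ ψ (c • B) + ψ A' := hsub _ hcBV _ hA'V
        _ = c * ψ B + ψ A' := by rw [hψhom c hcpos B hBV]
        _ ≤ c * f B + f A' := add_le_add (mul_le_mul_of_nonneg_left hψB hcpos.le) hψA'
        _ = f A := hfAdd.symm
  exact fun A hA => key _ A hA rfl
end

section
/- Let S_n be a weighted star on n vertices with center adjacent to n−1 leaves, with edge weights listed in decreasing order ω_1 ≥ ⋯ ≥ ω_t > 0 ≥ ω_{t+1} ≥ ⋯ ≥ ω_{n−1}. Then for every k with 1 ≤ k ≤ n−2 and every orthonormal family u_1, …, u_k of vectors in ℝ^n each orthogonal to the all-ones vector, Σ_{i=1}^k u_iᵀ L_{S_n} u_i ≤ (Σ_{i=1}^t ω_i) + Σ_{i=1}^k ω_i, and Σ_{i=1}^{n−1} μ_i(L_{S_n}) = 2 Σ_{i=1}^{n−1} ω_i, i.e. the trace of L_{S_n} is twice the total edge weight. -/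
/-!
Write `b j = ∑ᵢ (uᵢ(leaf j) - uᵢ(center))²`, so that the left-hand side is `∑ⱼ ωⱼ bⱼ`. Splitting
off the mean of a vertex set `T ∋ center`, `∑_{y ∈ T} (x_y - x_center)²` is the variance of `x` on
`T` plus `|T|` times the squared deviation of `x_center` from the mean, and both pieces are squared
inner products of `x` with explicit vectors, so Bessel's inequality for the orthonormal family
bounds their sums over `i`. This gives `∑_{j ∈ S} bⱼ ≤ |S| + min(k, |S|)` for every set `S` of leaves,
and, using `uᵢ ⊥ 𝟙`, also `∑_{j ∈ S} bⱼ ≥ k - min(k, m - |S|)`. Applied to initial and final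
segments of the leaves, these say that `b` is majorized by the indicator sum `1_{[0,t)} + 1_{[0,k)}`
from the front on the positive weights and from the back on the non-positive ones, and Abel
summation against the decreasing weights `ω` gives the bound.
-/

open Matrix

/-- The Laplacian matrix of a weighted graph with (symmetric, zero-diagonal)
adjacency matrix `A`: `L_A = D - A` where `D` is the diagonal matrix of row sums. -/
def lap {n : ℕ} (A : Matrix (Fin n) (Fin n) ℝ) : Matrix (Fin n) (Fin n) ℝ :=
  Matrix.diagonal (fun i => ∑ j, A i j) - A

/-- The adjacency matrix of the weighted star on `m + 1` vertices with center `0`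
and edge weights `ω 0, …, ω (m-1)` on the edges to the `m` leaves. -/
def starAdj (m : ℕ) (ω : Fin m → ℝ) : Matrix (Fin (m + 1)) (Fin (m + 1)) ℝ :=
  fun i j =>
    if hi : i = 0 then (if hj : j = 0 then 0 else ω (j.pred hj))
    else if hj : j = 0 then ω (i.pred hi) else 0

open Finset

theorem Finset.sum_sq_sub_eq_sum_sq_sub_mean_add {ι : Type*} (T : Finset ι) (x : ι → ℝ) (a : ℝ) :
    ∑ y ∈ T, (x y - a) ^ 2 =
      ∑ y ∈ T, (x y - (∑ z ∈ T, x z) / #T) ^ 2 + #T * ((∑ z ∈ T, x z) / #T - a) ^ 2 := by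
  rcases T.eq_empty_or_nonempty with rfl | hT
  · simp
  have : (#T : ℝ) ≠ 0 := by positivity
  simp only [sub_sq, sum_add_distrib, sum_sub_distrib, ← sum_mul, ← mul_sum, sum_const,
    nsmul_eq_mul]
  field_simp
  ring

section Bessel

variable {ι κ : Type*} [Fintype ι] [Fintype κ] [DecidableEq κ] {u : κ → ι → ℝ}

theorem sum_dotProduct_sq_le (hu : ∀ i j, u i ⬝ᵥ u j = if i = j then 1 else 0) (c : ι → ℝ) :
    ∑ i, (c ⬝ᵥ u i) ^ 2 ≤ c ⬝ᵥ c := by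
  let v : κ → EuclideanSpace ℝ ι := fun i => WithLp.toLp 2 (u i)
  have hv : Orthonormal ℝ v :=
    orthonormal_iff_ite.2 fun i j => by
      rw [EuclideanSpace.inner_toLp_toLp, star_trivial, dotProduct_comm, hu]
  have h := hv.sum_inner_products_le (WithLp.toLp 2 c : EuclideanSpace ℝ ι) (s := univ)
  rw [← real_inner_self_eq_norm_sq, EuclideanSpace.inner_toLp_toLp, star_trivial] at h
  convert h using 2 with i
  rw [Real.norm_eq_abs, sq_abs, EuclideanSpace.inner_toLp_toLp, star_trivial]

theorem sum_dotProduct_sq_le_sum_sq_sub (hu : ∀ i j, u i ⬝ᵥ u j = if i = j then 1 else 0)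
    (hu₀ : ∀ i, ∑ y, u i y = 0) (c : ι → ℝ) (a : ℝ) :
    ∑ i, (c ⬝ᵥ u i) ^ 2 ≤ ∑ y, (c y - a) ^ 2 := by
  have hdot : ∀ i, (fun y => c y - a) ⬝ᵥ u i = c ⬝ᵥ u i := fun i => by
    simp [dotProduct, sub_mul, sum_sub_distrib, ← mul_sum, hu₀]
  have h := sum_dotProduct_sq_le hu fun y => c y - a
  simp only [hdot] at h
  simpa [dotProduct, sq] using h

variable [DecidableEq ι]

noncomputable def centeredSingle (T : Finset ι) (y : ι) : ι → ℝ :=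
  fun z => (if z = y then 1 else 0) - if z ∈ T then (#T : ℝ)⁻¹ else 0

theorem centeredSingle_dotProduct (T : Finset ι) (y : ι) (x : ι → ℝ) :
    centeredSingle T y ⬝ᵥ x = x y - (∑ z ∈ T, x z) / #T := by
  simp [centeredSingle, dotProduct, sub_mul, sum_sub_distrib, ite_mul, ← mul_sum, div_eq_inv_mul]

theorem centeredSingle_dotProduct_self {T : Finset ι} {y : ι} (hy : y ∈ T) :
    centeredSingle T y ⬝ᵥ centeredSingle T y = 1 - (#T : ℝ)⁻¹ := by
  have hT : (#T : ℝ) ≠ 0 := by have := card_pos.2 ⟨y, hy⟩; positivity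
  rw [centeredSingle_dotProduct]
  simp [centeredSingle, hy, sum_sub_distrib, sum_ite_eq', hT]

theorem sum_sum_sq_sub_mean_le (hu : ∀ i j, u i ⬝ᵥ u j = if i = j then 1 else 0)
    {T : Finset ι} (hT : T.Nonempty) :
    ∑ i, ∑ y ∈ T, (u i y - (∑ z ∈ T, u i z) / #T) ^ 2 ≤ min (Fintype.card κ : ℝ) (#T - 1) := by
  refine le_min ?_ ?_
  · calc _ ≤ ∑ _i : κ, (1 : ℝ) := sum_le_sum fun i _ => ?_
      _ = _ := by simp
    calc _ ≤ ∑ y ∈ T, (u i y - 0) ^ 2 := by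
          rw [T.sum_sq_sub_eq_sum_sq_sub_mean_add (u i) 0]
          exact le_add_of_nonneg_right (by positivity)
      _ ≤ ∑ y, u i y ^ 2 := by
          simpa using sum_le_univ_sum_of_nonneg (s := T) (f := fun y => u i y ^ 2) fun _ =>
            sq_nonneg _
      _ = 1 := by simpa [dotProduct, sq] using hu i i
  · have hT' : (#T : ℝ) ≠ 0 := by have := card_pos.2 hT; positivity
    rw [sum_comm]
    calc _ = ∑ y ∈ T, ∑ i, (centeredSingle T y ⬝ᵥ u i) ^ 2 := by
          simp [centeredSingle_dotProduct]
      _ ≤ ∑ y ∈ T, (1 - (#T : ℝ)⁻¹) := sum_le_sum fun y hy => by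
          simpa [centeredSingle_dotProduct_self hy] using
            sum_dotProduct_sq_le hu (centeredSingle T y)
      _ = #T - 1 := by
          simp only [sum_sub_distrib, sum_const, nsmul_eq_mul, mul_one]
          field_simp

theorem sum_sum_sq_sub_le (hu : ∀ i j, u i ⬝ᵥ u j = if i = j then 1 else 0)
    {T : Finset ι} {y₀ : ι} (hy₀ : y₀ ∈ T) :
    ∑ i, ∑ y ∈ T, (u i y - u i y₀) ^ 2 ≤ (#T - 1) + min (Fintype.card κ : ℝ) (#T - 1) := by
  have hT : (#T : ℝ) ≠ 0 := by have := card_pos.2 ⟨y₀, hy₀⟩; positivity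
  have hcenter : ∑ i, (#T : ℝ) * ((∑ z ∈ T, u i z) / #T - u i y₀) ^ 2 ≤ #T - 1 := by
    calc _ = #T * ∑ i, (centeredSingle T y₀ ⬝ᵥ u i) ^ 2 := by
          simp only [mul_sum, centeredSingle_dotProduct]
          congr 1; ext i; ring
      _ ≤ #T * (1 - (#T : ℝ)⁻¹) := by
          gcongr
          simpa [centeredSingle_dotProduct_self hy₀] using
            sum_dotProduct_sq_le hu (centeredSingle T y₀)
      _ = #T - 1 := by field_simp
  simp only [T.sum_sq_sub_eq_sum_sq_sub_mean_add (u _) (u _ y₀), sum_add_distrib]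
  linarith [sum_sum_sq_sub_mean_le hu ⟨y₀, hy₀⟩]

theorem sum_sq_apply_le (hu : ∀ i j, u i ⬝ᵥ u j = if i = j then 1 else 0)
    (hu₀ : ∀ i, ∑ y, u i y = 0) (y : ι) :
    ∑ i, u i y ^ 2 ≤ 1 - (Fintype.card ι : ℝ)⁻¹ := by
  simpa [centeredSingle_dotProduct, hu₀, centeredSingle_dotProduct_self (mem_univ y)] using
    sum_dotProduct_sq_le hu (centeredSingle univ y)

theorem sum_sq_sum_le (hu : ∀ i j, u i ⬝ᵥ u j = if i = j then 1 else 0)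
    (hu₀ : ∀ i, ∑ y, u i y = 0) (T : Finset ι) :
    ∑ i, (∑ z ∈ T, u i z) ^ 2 ≤ #T - #T ^ 2 / Fintype.card ι := by
  rcases T.eq_empty_or_nonempty with rfl | hT
  · simp
  have hN : (Fintype.card ι : ℝ) ≠ 0 := by
    have := hT.card_pos.trans_le (card_le_univ T); positivity
  have hind : ∀ i, (fun y => if y ∈ T then (1 : ℝ) else 0) ⬝ᵥ u i = ∑ z ∈ T, u i z :=
    fun i => by simp [dotProduct, ite_mul]
  have hsq : ∀ y, ((if y ∈ T then (1 : ℝ) else 0) - #T / Fintype.card ι) ^ 2 =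
      (if y ∈ T then 1 - 2 * ((#T : ℝ) / Fintype.card ι) else 0) +
        ((#T : ℝ) / Fintype.card ι) ^ 2 := by
    intro y; split_ifs <;> ring
  have hnorm : ∑ y, ((if y ∈ T then (1 : ℝ) else 0) - #T / Fintype.card ι) ^ 2 =
      #T - #T ^ 2 / Fintype.card ι := by
    simp only [hsq, sum_add_distrib, sum_ite_mem, univ_inter, sum_const, card_univ, nsmul_eq_mul]
    field_simp
    ring
  simpa [hind, hnorm] using sum_dotProduct_sq_le_sum_sq_sub hu hu₀
    (fun y => if y ∈ T then 1 else 0) (#T / Fintype.card ι)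

theorem card_sub_min_le_sum_sum_sq_sub (hu : ∀ i j, u i ⬝ᵥ u j = if i = j then 1 else 0)
    (hu₀ : ∀ i, ∑ y, u i y = 0) {T : Finset ι} {y₀ : ι} (hy₀ : y₀ ∈ T) :
    Fintype.card κ - min (Fintype.card κ : ℝ) #Tᶜ ≤ ∑ i, ∑ y ∈ T, (u i y - u i y₀) ^ 2 := by
  have hT : (#T : ℝ) ≠ 0 := by have := card_pos.2 ⟨y₀, hy₀⟩; positivity
  have hN : (Fintype.card ι : ℝ) = #T + #Tᶜ := by exact_mod_cast (card_add_card_compl T).symm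
  set V : κ → ℝ := fun i => ∑ y ∈ T, (u i y - (∑ z ∈ T, u i z) / #T) ^ 2
  have hV : ∀ i, 1 - V i = ∑ y ∈ Tᶜ, u i y ^ 2 + (∑ z ∈ T, u i z) ^ 2 / #T := fun i => by
    have h₁ : ∑ y ∈ T, u i y ^ 2 + ∑ y ∈ Tᶜ, u i y ^ 2 = 1 := by
      rw [sum_add_sum_compl]; simpa [dotProduct, sq] using hu i i
    have h₂ := T.sum_sq_sub_eq_sum_sq_sub_mean_add (u i) 0
    have h₃ : (#T : ℝ) * ((∑ z ∈ T, u i z) / #T) ^ 2 = (∑ z ∈ T, u i z) ^ 2 / #T := by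
      field_simp
    simp only [sub_zero] at h₂
    linarith
  have hbound : ∑ i, (1 - V i) ≤ min (Fintype.card κ : ℝ) #Tᶜ := by
    refine le_min ?_ ?_
    · calc _ ≤ ∑ _i : κ, (1 : ℝ) :=
            sum_le_sum fun i _ => by linarith [show 0 ≤ V i by positivity]
        _ = _ := by simp
    · simp only [hV, sum_add_distrib, ← sum_div]
      rw [sum_comm]
      calc _ ≤ ∑ _y ∈ Tᶜ, (1 - (Fintype.card ι : ℝ)⁻¹) + (#T - #T ^ 2 / Fintype.card ι) / #T := by
            gcongr with y
            · exact sum_sq_apply_le hu hu₀ y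
            · exact sum_sq_sum_le hu hu₀ T
        _ = #Tᶜ := by rw [sum_const, nsmul_eq_mul, hN]; field_simp; ring
  have hmean : ∀ i, V i ≤ ∑ y ∈ T, (u i y - u i y₀) ^ 2 := fun i => by
    rw [T.sum_sq_sub_eq_sum_sq_sub_mean_add (u i) (u i y₀)]
    exact le_add_of_nonneg_right (by positivity)
  have := sum_le_sum fun i (_ : i ∈ univ) => hmean i
  simp only [sum_sub_distrib, sum_const, card_univ, nsmul_one] at hbound
  linarith

end Bessel

section Abel

theorem Fin.sum_mul_nonneg_of_antitone {n : ℕ} {f d : Fin n → ℝ} (hf : Antitone f)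
    (hf₀ : ∀ i, 0 ≤ f i) (hd : ∀ r, 0 < f r → 0 ≤ ∑ i ∈ Iic r, d i) :
    0 ≤ ∑ i, f i * d i := by
  induction n with
  | zero => simp
  | succ n ih =>
    have hsplit : ∑ i, f i * d i = ∑ i : Fin n, (f i.castSucc - f (last n)) * d i.castSucc +
        f (last n) * ∑ i, d i := by
      simp only [Fin.sum_univ_castSucc, sub_mul, sum_sub_distrib, mul_add, mul_sum]
      ring
    rw [hsplit]
    refine add_nonneg (ih (fun i j hij => sub_le_sub_right (hf (castSucc_le_castSucc_iff.2 hij)) _)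
      (fun i => sub_nonneg.2 (hf (le_last _))) fun r hr => ?_) ?_
    · have h : ∑ i ∈ Iic r, d i.castSucc = ∑ i ∈ Iic r.castSucc, d i := by
        rw [← map_castSuccEmb_Iic, sum_map]; rfl
      exact h ▸ hd _ (by linarith [hf₀ (last n)])
    · rcases (hf₀ (last n)).eq_or_lt with h | h
      · simp [← h]
      · simpa [← top_eq_last, Iic_top] using mul_nonneg h.le (hd _ h)

theorem Fin.sum_mul_nonneg_of_partialSums {n : ℕ} {f d : Fin n → ℝ} (hf : Antitone f)
    (hhead : ∀ r, 0 < f r → 0 ≤ ∑ i ∈ Iic r, d i) (htail : ∀ r, f r < 0 → ∑ i ∈ Ici r, d i ≤ 0) :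
    0 ≤ ∑ i, f i * d i := by
  have hpos : 0 ≤ ∑ i, max (f i) 0 * d i :=
    sum_mul_nonneg_of_antitone (fun i j hij => max_le_max_right _ (hf hij))
      (fun i => le_max_right _ _) fun r hr => hhead r (by simpa using hr)
  have hneg : 0 ≤ ∑ i : Fin n, -min (f i.rev) 0 * -d i.rev := by
    refine sum_mul_nonneg_of_antitone
      (fun i j hij => neg_le_neg (min_le_min_right _ (hf (rev_le_rev.2 hij))))
      (fun i => neg_nonneg.2 (min_le_right _ _)) fun r hr => ?_
    have h : ∑ i ∈ Iic r, d i.rev = ∑ i ∈ Ici r.rev, d i := by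
      rw [← map_revPerm_Iic, sum_map]; rfl
    rw [sum_neg_distrib, h]
    exact neg_nonneg.2 (htail _ (by simpa using hr))
  have hrev : ∑ i : Fin n, -min (f i.rev) 0 * -d i.rev = ∑ i, min (f i) 0 * d i := by
    simpa using Fintype.sum_equiv revPerm _ (fun i => min (f i) 0 * d i) fun _ => rfl
  calc (0 : ℝ) ≤ ∑ i, max (f i) 0 * d i + ∑ i, min (f i) 0 * d i := by linarith
    _ = ∑ i, f i * d i := by rw [← sum_add_distrib]; simp [← add_mul, max_add_min]

theorem Fin.card_filter_le_val_lt (m x a : ℕ) :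
    #{i : Fin m | x ≤ (i : ℕ) ∧ (i : ℕ) < a} = min m a - x := by
  have : ({i : Fin m | x ≤ (i : ℕ) ∧ (i : ℕ) < a} : Finset (Fin m)).map valEmbedding =
      Ico x (min m a) := by
    ext j
    simp only [mem_map, mem_filter, mem_univ, true_and, valEmbedding_apply, mem_Ico, lt_min_iff]
    constructor
    · rintro ⟨i, hi, rfl⟩; omega
    · intro h; exact ⟨⟨j, h.2.1⟩, ⟨h.1, h.2.2⟩, rfl⟩
  rw [← card_map, this, Nat.card_Ico]

theorem Fin.card_filter_Iic_val_lt {m : ℕ} (r : Fin m) (a : ℕ) :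
    #((Iic r).filter fun i : Fin m => (i : ℕ) < a) = min ((r : ℕ) + 1) a := by
  have h : (Iic r).filter (fun i : Fin m => (i : ℕ) < a) =
      univ.filter (fun i : Fin m => 0 ≤ (i : ℕ) ∧ (i : ℕ) < min ((r : ℕ) + 1) a) := by
    ext i
    simp only [mem_filter, mem_Iic, mem_univ, true_and, Fin.le_iff_val_le_val]
    omega
  rw [h, card_filter_le_val_lt]
  omega

theorem Fin.card_filter_Ici_val_lt {m : ℕ} (r : Fin m) {a : ℕ} (ha : a ≤ m) :
    #((Ici r).filter fun i : Fin m => (i : ℕ) < a) = a - r := by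
  have h : (Ici r).filter (fun i : Fin m => (i : ℕ) < a) =
      univ.filter (fun i : Fin m => (r : ℕ) ≤ (i : ℕ) ∧ (i : ℕ) < a) := by
    ext i
    simp only [mem_filter, mem_Ici, mem_univ, true_and, Fin.le_iff_val_le_val]
  rw [h, card_filter_le_val_lt]
  omega

theorem sum_mul_le_sum_filter_add_sum_filter {m t k : ℕ} (hk : k ≤ m) {f b : Fin m → ℝ}
    (hf : Antitone f) (hpos : ∀ i : Fin m, (i : ℕ) < t → 0 ≤ f i)
    (hnonpos : ∀ i : Fin m, t ≤ (i : ℕ) → f i ≤ 0)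
    (hhead : ∀ S : Finset (Fin m), ∑ i ∈ S, b i ≤ #S + min (k : ℝ) #S)
    (htail : ∀ S : Finset (Fin m), k - min (k : ℝ) (m - #S : ℕ) ≤ ∑ i ∈ S, b i) :
    ∑ i, f i * b i ≤ ∑ i ∈ univ.filter (fun i : Fin m => (i : ℕ) < t), f i +
      ∑ i ∈ univ.filter (fun i : Fin m => (i : ℕ) < k), f i := by
  set c : Fin m → ℝ := fun i => (if (i : ℕ) < t then 1 else 0) + (if (i : ℕ) < k then 1 else 0)
  have hc : ∀ S : Finset (Fin m), ∑ i ∈ S, c i =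
      #(S.filter fun i : Fin m => (i : ℕ) < t) + #(S.filter fun i : Fin m => (i : ℕ) < k) :=
    fun S => by simp [c, sum_add_distrib, sum_boole]
  have hrhs : ∑ i ∈ univ.filter (fun i : Fin m => (i : ℕ) < t), f i +
      ∑ i ∈ univ.filter (fun i : Fin m => (i : ℕ) < k), f i = ∑ i, f i * c i := by
    simp [c, mul_add, sum_add_distrib, sum_filter]
  rw [hrhs, ← sub_nonneg, ← sum_sub_distrib]
  simp_rw [← mul_sub]
  refine Fin.sum_mul_nonneg_of_partialSums hf (fun r hr => ?_) (fun r hr => ?_)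
  · have hrt : (r : ℕ) < t := by by_contra h; linarith [hnonpos r (not_lt.1 h)]
    have h₁ : (Iic r).filter (fun i : Fin m => (i : ℕ) < t) = Iic r :=
      filter_true_of_mem fun i hi => by have := Fin.le_iff_val_le_val.1 (mem_Iic.1 hi); omega
    rw [sum_sub_distrib, sub_nonneg, hc, h₁, Fin.card_filter_Iic_val_lt]
    refine (hhead _).trans_eq ?_
    rw [Fin.card_Iic, Nat.cast_min, min_comm]
  · have hrt : t ≤ (r : ℕ) := by by_contra h; linarith [hpos r (not_le.1 h)]
    have h₁ : (Ici r).filter (fun i : Fin m => (i : ℕ) < t) = ∅ :=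
      filter_false_of_mem fun i hi => by have := Fin.le_iff_val_le_val.1 (mem_Ici.1 hi); omega
    rw [sum_sub_distrib, sub_nonpos, hc, h₁, Fin.card_filter_Ici_val_lt r hk, card_empty]
    refine le_trans ?_ (htail (Ici r))
    rw [Fin.card_Ici, show m - (m - ↑r) = ↑r by omega, show k - ↑r = k - min k ↑r by omega]
    push_cast [Nat.cast_sub (min_le_left _ _)]
    simp

end Abel

theorem dotProduct_lap_mulVec {n : ℕ} {A : Matrix (Fin n) (Fin n) ℝ} (hA : A.IsSymm)
    (x : Fin n → ℝ) : x ⬝ᵥ lap A *ᵥ x = (∑ y, ∑ z, A y z * (x y - x z) ^ 2) / 2 := by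
  have hlhs : x ⬝ᵥ lap A *ᵥ x = ∑ y, ∑ z, A y z * (x y ^ 2 - x y * x z) := by
    rw [lap, sub_mulVec, dotProduct_sub]
    simp only [dotProduct, mulVec_diagonal]
    simp only [mulVec, dotProduct, mul_sub, sum_sub_distrib, sum_mul, mul_sum]
    congr 1 <;> exact sum_congr rfl fun y _ => sum_congr rfl fun z _ => by ring
  have hswap : ∑ y, ∑ z, A y z * (x z ^ 2 - x y * x z) =
      ∑ y, ∑ z, A y z * (x y ^ 2 - x y * x z) := by
    rw [sum_comm]
    exact sum_congr rfl fun y _ => sum_congr rfl fun z _ => by rw [hA.apply z y]; ring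
  rw [hlhs, eq_div_iff two_ne_zero, mul_two]
  nth_rewrite 2 [← hswap]
  rw [← sum_add_distrib]
  exact sum_congr rfl fun y _ => by rw [← sum_add_distrib]; exact sum_congr rfl fun z _ => by ring

section Star

variable {m : ℕ} (ω : Fin m → ℝ)

@[simp] theorem starAdj_zero_zero : starAdj m ω 0 0 = 0 := by simp [starAdj]

@[simp] theorem starAdj_zero_succ (j : Fin m) : starAdj m ω 0 j.succ = ω j := by simp [starAdj]

@[simp] theorem starAdj_succ_zero (j : Fin m) : starAdj m ω j.succ 0 = ω j := by simp [starAdj]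

@[simp] theorem starAdj_succ_succ (i j : Fin m) : starAdj m ω i.succ j.succ = 0 := by
  simp [starAdj]

theorem starAdj_isSymm : (starAdj m ω).IsSymm := by
  ext y z
  cases y using Fin.cases <;> cases z using Fin.cases <;> simp

theorem dotProduct_lap_starAdj_mulVec (x : Fin (m + 1) → ℝ) :
    x ⬝ᵥ lap (starAdj m ω) *ᵥ x = ∑ j, ω j * (x j.succ - x 0) ^ 2 := by
  rw [dotProduct_lap_mulVec (starAdj_isSymm ω)]
  simp [Fin.sum_univ_succ, sub_sq_comm (x 0)]

theorem trace_lap_starAdj : (lap (starAdj m ω)).trace = 2 * ∑ i, ω i := by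
  simp only [trace, lap, Fin.sum_univ_succ, diag_apply, Matrix.sub_apply, diagonal_apply_eq,
    sum_sub_distrib, starAdj_zero_zero, starAdj_zero_succ, zero_add, starAdj_succ_zero,
    starAdj_succ_succ, sum_const_zero, add_zero, sub_zero]
  ring

end Star

section Leaves

variable {m k : ℕ} {u : Fin k → Fin (m + 1) → ℝ}

theorem sum_insert_zero_map_succ (S : Finset (Fin m)) (g : Fin (m + 1) → ℝ) :
    ∑ y ∈ insert 0 (S.map (Fin.succEmb m)), g y = g 0 + ∑ j ∈ S, g j.succ := by
  rw [sum_insert (by simp), sum_map]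
  rfl

theorem card_insert_zero_map_succ (S : Finset (Fin m)) :
    #(insert 0 (S.map (Fin.succEmb m))) = #S + 1 := by
  rw [card_insert_of_notMem (by simp), card_map]

theorem sum_sum_sq_succ_sub_zero_le (hu : ∀ i j, u i ⬝ᵥ u j = if i = j then 1 else 0)
    (S : Finset (Fin m)) :
    ∑ j ∈ S, ∑ i, (u i j.succ - u i 0) ^ 2 ≤ #S + min (k : ℝ) #S := by
  have h := sum_sum_sq_sub_le hu (mem_insert_self 0 (S.map (Fin.succEmb m)))
  simp only [sum_insert_zero_map_succ, card_insert_zero_map_succ, sub_self, Fintype.card_fin]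
    at h
  rw [sum_comm]
  simpa using h

theorem le_sum_sum_sq_succ_sub_zero (hu : ∀ i j, u i ⬝ᵥ u j = if i = j then 1 else 0)
    (hu₀ : ∀ i, ∑ y, u i y = 0) (S : Finset (Fin m)) :
    k - min (k : ℝ) (m - #S : ℕ) ≤ ∑ j ∈ S, ∑ i, (u i j.succ - u i 0) ^ 2 := by
  have h := card_sub_min_le_sum_sum_sq_sub hu hu₀ (mem_insert_self 0 (S.map (Fin.succEmb m)))
  simp only [card_compl, card_insert_zero_map_succ, Fintype.card_fin, Nat.add_sub_add_right,
    sum_insert_zero_map_succ, sub_self] at h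
  rw [sum_comm]
  simpa using h

end Leaves

theorem weighted_star_lap_eigenvalue_bounds_general {m : ℕ}
    (ω : Fin m → ℝ) (hmono : Antitone ω)
    (t : ℕ)
    (hpos : ∀ i : Fin m, (i : ℕ) < t → 0 < ω i)
    (hnonpos : ∀ i : Fin m, t ≤ (i : ℕ) → ω i ≤ 0) :
    (∀ k : ℕ, 1 ≤ k → k ≤ m - 1 →
      ∀ u : Fin k → Fin (m + 1) → ℝ,
        (∀ i j, u i ⬝ᵥ u j = if i = j then 1 else 0) →
        (∀ i, ∑ l, u i l = 0) →
        ∑ i, u i ⬝ᵥ (lap (starAdj m ω)).mulVec (u i) ≤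
          (∑ i ∈ Finset.univ.filter (fun i : Fin m => (i : ℕ) < t), ω i) +
            ∑ i ∈ Finset.univ.filter (fun i : Fin m => (i : ℕ) < k), ω i) ∧
    (lap (starAdj m ω)).trace = 2 * ∑ i, ω i := by
  refine ⟨fun k _ hk u hu hu₀ => ?_, trace_lap_starAdj ω⟩
  simp only [dotProduct_lap_starAdj_mulVec]
  rw [sum_comm]
  simp only [← mul_sum]
  exact sum_mul_le_sum_filter_add_sum_filter (by omega) hmono (fun i hi => (hpos i hi).le) hnonpos
    (sum_sum_sq_succ_sub_zero_le hu) (le_sum_sum_sq_succ_sub_zero hu hu₀)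

theorem weighted_star_lap_eigenvalue_bounds {m : ℕ}
    (ω : Fin m → ℝ) (hmono : Antitone ω)
    (t : ℕ) (ht : t ≤ m)
    (hpos : ∀ i : Fin m, (i : ℕ) < t → 0 < ω i)
    (hnonpos : ∀ i : Fin m, t ≤ (i : ℕ) → ω i ≤ 0) :
    (∀ k : ℕ, 1 ≤ k → k ≤ m - 1 →
      ∀ u : Fin k → Fin (m + 1) → ℝ,
        (∀ i j, u i ⬝ᵥ u j = if i = j then 1 else 0) →
        (∀ i, ∑ l, u i l = 0) →
        ∑ i, u i ⬝ᵥ (lap (starAdj m ω)).mulVec (u i) ≤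
          (∑ i ∈ Finset.univ.filter (fun i : Fin m => (i : ℕ) < t), ω i) +
            ∑ i ∈ Finset.univ.filter (fun i : Fin m => (i : ℕ) < k), ω i) ∧
    (lap (starAdj m ω)).trace = 2 * ∑ i, ω i :=
  weighted_star_lap_eigenvalue_bounds_general ω hmono t hpos hnonpos
end

section
/- Let t, n ∈ ℕ, let u_1, …, u_t ∈ ℝ^n be unit vectors, let θ_1 ≥ θ_2 ≥ ⋯ ≥ θ_t > 0, and let A = Σ_{i=1}^t θ_i u_i u_iᵀ. Then for every k with 1 ≤ k ≤ min(n, t), Σ_{i=1}^k θ_i ≤ Σ_{i=1}^k λ_i(A), where λ_1(A) ≥ ⋯ ≥ λ_n(A) are the eigenvalues of the symmetric matrix A in decreasing order. -/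
/-!
Let `b_1, …, b_n` be the Gram–Schmidt orthonormalisation of `u_1, …, u_t` (padded with zeros).
For `i ≤ k` the vector `u_i` lies in the span of `b_1, …, b_k`, so `∑_{j ≤ k} ⟪b_j, u_i⟫² = 1`;
since all `θ_i > 0`, this gives
`θ_1 + ⋯ + θ_k ≤ ∑_i θ_i ∑_{j ≤ k} ⟪b_j, u_i⟫² = ∑_{j ≤ k} ⟪b_j, A b_j⟫`.
The right-hand side is at most `λ_1 + ⋯ + λ_k` by Ky Fan's maximum principle: in an eigenbasis,
`∑_{j ≤ k} ⟪b_j, A b_j⟫ = ∑_i λ_i c_i` with weights `0 ≤ c_i ≤ 1` (Bessel) summing to `k`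
(Parseval), and such a weighted sum is at most the sum of the `k` largest `λ_i`.
-/

open Matrix

open Finset

theorem sum_mul_le_sum_of_threshold {ι : Type*} [Fintype ι] (s : Finset ι) (f c : ι → ℝ) (μ : ℝ)
    (hs : ∀ i ∈ s, μ ≤ f i) (hsc : ∀ i ∉ s, f i ≤ μ) (hc0 : ∀ i, 0 ≤ c i) (hc1 : ∀ i, c i ≤ 1)
    (hc : ∑ i, c i = #s) :
    ∑ i, f i * c i ≤ ∑ i ∈ s, f i := by
  classical
  have key : ∀ i,
      f i * c i ≤ (if i ∈ s then f i else 0) + μ * (c i - if i ∈ s then 1 else 0) := by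
    intro i
    split_ifs with hi
    · nlinarith [hs i hi, hc1 i]
    · nlinarith [hsc i hi, hc0 i]
  calc ∑ i, f i * c i
      ≤ ∑ i, ((if i ∈ s then f i else 0) + μ * (c i - if i ∈ s then 1 else 0)) :=
        sum_le_sum fun i _ => key i
    _ = ∑ i ∈ s, f i := by
        simp only [sum_add_distrib, ← mul_sum, sum_sub_distrib, sum_ite_mem, univ_inter, hc,
          sum_const, nsmul_eq_mul, mul_one, sub_self, mul_zero, add_zero]

theorem Antitone.sum_mul_le_sum_filter_lt {p k : ℕ} {f : Fin p → ℝ} (hf : Antitone f)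
    (c : Fin p → ℝ) (hc0 : ∀ i, 0 ≤ c i) (hc1 : ∀ i, c i ≤ 1) (hc : ∑ i, c i = k) :
    ∑ i, f i * c i ≤ ∑ i ∈ univ.filter (fun i : Fin p => (i : ℕ) < k), f i := by
  have hkp : k ≤ p := by
    have := sum_le_sum fun i (_ : i ∈ univ) => hc1 i
    simp only [hc, sum_const, card_univ, Fintype.card_fin, nsmul_eq_mul, mul_one] at this
    exact_mod_cast this
  have hcard : #(univ.filter fun i : Fin p => (i : ℕ) < k) = k := by
    rw [Fin.card_filter_val_lt, min_eq_right hkp]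
  obtain ⟨μ, hs, hsc⟩ : ∃ μ, (∀ i : Fin p, (i : ℕ) < k → μ ≤ f i) ∧
      (∀ i : Fin p, ¬ (i : ℕ) < k → f i ≤ μ) := by
    cases k with
    | zero =>
      obtain ⟨μ, hμ⟩ := (Set.finite_range f).bddAbove
      exact ⟨μ, by simp, fun i _ => hμ ⟨i, rfl⟩⟩
    | succ k =>
      refine ⟨f ⟨k, hkp⟩, fun i hi => hf ?_, fun i hi => hf ?_⟩ <;>
        simp only [Fin.le_def] <;> omega
  exact sum_mul_le_sum_of_threshold _ f c μ (by simpa using hs) (by simpa using hsc) hc0 hc1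
    (by rw [hc, hcard])

theorem downOrd_antitone {p : ℕ} (x : Fin p → ℝ) : Antitone (downOrd x) :=
  fun _ _ hij => Tuple.monotone_sort x (Fin.rev_le_rev.mpr hij)

theorem sum_mul_le_sum_downOrd {p k : ℕ} (x c : Fin p → ℝ)
    (hc0 : ∀ i, 0 ≤ c i) (hc1 : ∀ i, c i ≤ 1) (hc : ∑ i, c i = k) :
    ∑ i, x i * c i ≤ ∑ i ∈ univ.filter (fun i : Fin p => (i : ℕ) < k), downOrd x i := by
  let σ : Equiv.Perm (Fin p) := Fin.revPerm.trans (Tuple.sort x)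
  rw [← Equiv.sum_comp σ]
  exact (downOrd_antitone x).sum_mul_le_sum_filter_lt (c ∘ σ) (fun _ => hc0 _) (fun _ => hc1 _)
    (by rw [← hc]; exact Equiv.sum_comp σ c)

namespace OrthonormalBasis

variable {𝕜 E : Type*} [RCLike 𝕜] [NormedAddCommGroup E] [InnerProductSpace 𝕜 E]

theorem re_inner_apply_self_eq_sum {p : ℕ} (b : OrthonormalBasis (Fin p) 𝕜 E)
    {T : E →ₗ[𝕜] E} {lam : Fin p → ℝ} (hb : ∀ i, T (b i) = (lam i : 𝕜) • b i) (x : E) :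
    RCLike.re (inner 𝕜 x (T x)) = ∑ i, lam i * ‖inner 𝕜 (b i) x‖ ^ 2 := by
  nth_rewrite 2 [← b.sum_repr' x]
  simp only [map_sum, map_smul, hb, inner_sum, inner_smul_right, ← inner_conj_symm x (b _)]
  simp only [mul_left_comm _ (lam _ : 𝕜), RCLike.mul_conj, ← RCLike.ofReal_pow,
    ← RCLike.ofReal_mul, RCLike.ofReal_re]

/-- Ky Fan's maximum principle. -/
theorem sum_re_inner_apply_self_le_sum_downOrd {p : ℕ} (b : OrthonormalBasis (Fin p) 𝕜 E)
    {T : E →ₗ[𝕜] E} {lam : Fin p → ℝ} (hb : ∀ i, T (b i) = (lam i : 𝕜) • b i)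
    {ι : Type*} {v : ι → E} (hv : Orthonormal 𝕜 v) (s : Finset ι) :
    ∑ j ∈ s, RCLike.re (inner 𝕜 (v j) (T (v j))) ≤
      ∑ i ∈ univ.filter (fun i : Fin p => (i : ℕ) < #s), downOrd lam i := by
  let c : Fin p → ℝ := fun i => ∑ j ∈ s, ‖inner 𝕜 (b i) (v j)‖ ^ 2
  have hc1 : ∀ i, c i ≤ 1 := fun i => by
    simpa only [c, norm_inner_symm (b i), b.orthonormal.1 i, one_pow] using
      hv.sum_inner_products_le (b i) (s := s)
  have hc : ∑ i, c i = #s := by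
    rw [sum_comm, card_eq_sum_ones, Nat.cast_sum]
    refine sum_congr rfl fun j _ => ?_
    rw [b.sum_sq_norm_inner_right, hv.1 j, one_pow, Nat.cast_one]
  calc ∑ j ∈ s, RCLike.re (inner 𝕜 (v j) (T (v j))) = ∑ i, lam i * c i := by
        simp only [b.re_inner_apply_self_eq_sum hb, c, mul_sum]
        exact sum_comm
    _ ≤ _ := sum_mul_le_sum_downOrd lam c (fun _ => sum_nonneg fun _ _ => by positivity) hc1 hc

theorem sum_sq_norm_inner_eq_of_inner_eq_zero {ι : Type*} [Fintype ι]
    (b : OrthonormalBasis ι 𝕜 E) (s : Finset ι) {x : E} (hx : ∀ j ∉ s, inner 𝕜 (b j) x = 0) :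
    ∑ j ∈ s, ‖inner 𝕜 (b j) x‖ ^ 2 = ‖x‖ ^ 2 := by
  rw [← b.sum_sq_norm_inner_right]
  exact sum_subset (subset_univ s) fun j _ hj => by rw [hx j hj, norm_zero, sq, zero_mul]

end OrthonormalBasis

theorem InnerProductSpace.sum_sq_norm_inner_gramSchmidtOrthonormalBasis {𝕜 E ι : Type*} [RCLike 𝕜]
    [NormedAddCommGroup E] [InnerProductSpace 𝕜 E] [FiniteDimensional 𝕜 E] [LinearOrder ι]
    [LocallyFiniteOrderBot ι] [WellFoundedLT ι] [Fintype ι]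
    (h : Module.finrank 𝕜 E = Fintype.card ι) (f : ι → E) {i : ι} {s : Finset ι}
    (hs : ∀ j ∉ s, i < j) :
    ∑ j ∈ s, ‖inner 𝕜 (gramSchmidtOrthonormalBasis h f j) (f i)‖ ^ 2 = ‖f i‖ ^ 2 :=
  (gramSchmidtOrthonormalBasis h f).sum_sq_norm_inner_eq_of_inner_eq_zero s fun j hj =>
    gramSchmidtOrthonormalBasis_inv_triangular h f (hs j hj)

theorem inner_toLpLin_sum_smul_vecMulVec_self {ι m : Type*} [Fintype ι] [Fintype m]
    [DecidableEq m] (u : ι → m → ℝ) (θ : ι → ℝ) (x : EuclideanSpace ℝ m) :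
    inner ℝ x (toLpLin 2 2 (∑ i, θ i • vecMulVec (u i) (u i)) x) =
      ∑ i, θ i * inner ℝ (WithLp.toLp 2 (u i) : EuclideanSpace ℝ m) x ^ 2 := by
  simp only [map_sum, map_smul, LinearMap.coe_sum, LinearMap.coe_smul, Finset.sum_apply,
    Pi.smul_apply, toLpLin_apply, vecMulVec_mulVec, op_smul_eq_smul, WithLp.toLp_smul,
    EuclideanSpace.inner_eq_star_dotProduct, WithLp.ofLp_sum, WithLp.ofLp_smul, star_trivial]
  simp only [sum_dotProduct, smul_dotProduct, dotProduct_comm x.ofLp, smul_eq_mul, sq]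

theorem sum_theta_le_sum_largest_eigenvalues_general {t n : ℕ}
    (u : Fin t → Fin n → ℝ) (hunit : ∀ i, u i ⬝ᵥ u i = 1)
    (θ : Fin t → ℝ) (hpos : ∀ i, 0 < θ i)
    (A : Matrix (Fin n) (Fin n) ℝ)
    (hA : A = ∑ i, θ i • Matrix.vecMulVec (u i) (u i))
    (hH : A.IsHermitian)
    (k : ℕ) (hkn : k ≤ n) :
    ∑ i ∈ Finset.univ.filter (fun i : Fin t => (i : ℕ) < k), θ i ≤
      ∑ i ∈ Finset.univ.filter (fun i : Fin n => (i : ℕ) < k),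
        downOrd hH.eigenvalues i := by
  set s := univ.filter fun j : Fin n => (j : ℕ) < k
  let w : Fin t → EuclideanSpace ℝ (Fin n) := fun i => WithLp.toLp 2 (u i)
  let f : Fin n → EuclideanSpace ℝ (Fin n) := fun j => if h : (j : ℕ) < t then w ⟨j, h⟩ else 0
  let b := InnerProductSpace.gramSchmidtOrthonormalBasis finrank_euclideanSpace f
  have hcover : ∀ i : Fin t, (i : ℕ) < k → ∑ j ∈ s, inner ℝ (b j) (w i) ^ 2 = 1 := by
    intro i hik
    have hwi : f ⟨i, by omega⟩ = w i := by simp [f]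
    have hnorm : ‖w i‖ ^ 2 = 1 := by
      rw [← real_inner_self_eq_norm_sq, EuclideanSpace.inner_eq_star_dotProduct]
      exact hunit i
    have hlater : ∀ j ∉ s, (⟨i, by omega⟩ : Fin n) < j := fun j hj => by
      simp only [s, mem_filter, mem_univ, true_and, not_lt] at hj
      exact Fin.lt_def.mpr (show (i : ℕ) < j by omega)
    simpa only [hwi, hnorm, Real.norm_eq_abs, sq_abs] using
      InnerProductSpace.sum_sq_norm_inner_gramSchmidtOrthonormalBasis
        (E := EuclideanSpace ℝ (Fin n)) finrank_euclideanSpace f hlater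
  have hT : ∀ j, toLpLin 2 2 A (hH.eigenvectorBasis j) =
      hH.eigenvalues j • hH.eigenvectorBasis j := fun j => by
    rw [toLpLin_apply, hH.mulVec_eigenvectorBasis]; rfl
  calc ∑ i ∈ univ.filter (fun i : Fin t => (i : ℕ) < k), θ i
      = ∑ i ∈ univ.filter (fun i : Fin t => (i : ℕ) < k),
          θ i * ∑ j ∈ s, inner ℝ (b j) (w i) ^ 2 :=
        sum_congr rfl fun i hi => by rw [hcover i (mem_filter.mp hi).2, mul_one]
    _ ≤ ∑ i, θ i * ∑ j ∈ s, inner ℝ (b j) (w i) ^ 2 :=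
        sum_le_univ_sum_of_nonneg fun i =>
          mul_nonneg (hpos i).le (sum_nonneg fun _ _ => sq_nonneg _)
    _ = ∑ j ∈ s, inner ℝ (b j) (toLpLin 2 2 A (b j)) := by
        simp only [hA, inner_toLpLin_sum_smul_vecMulVec_self, mul_sum, real_inner_comm (b _)]
        exact sum_comm
    _ ≤ _ := by
        have := hH.eigenvectorBasis.sum_re_inner_apply_self_le_sum_downOrd hT b.orthonormal s
        rwa [Fin.card_filter_val_lt, min_eq_right hkn] at this

/-- If `A = Σ θ_i u_i u_iᵀ` with unit vectors `u_i` and `θ_1 ≥ ⋯ ≥ θ_t > 0`, then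
`(θ_1, …, θ_k)` is dominated by the `k` largest eigenvalues of `A`. -/
theorem sum_theta_le_sum_largest_eigenvalues {t n : ℕ}
    (u : Fin t → Fin n → ℝ) (hunit : ∀ i, u i ⬝ᵥ u i = 1)
    (θ : Fin t → ℝ) (hmono : Antitone θ) (hpos : ∀ i, 0 < θ i)
    (A : Matrix (Fin n) (Fin n) ℝ)
    (hA : A = ∑ i, θ i • Matrix.vecMulVec (u i) (u i))
    (hH : A.IsHermitian)
    (k : ℕ) (hk1 : 1 ≤ k) (hkn : k ≤ n) (hkt : k ≤ t) :
    ∑ i ∈ Finset.univ.filter (fun i : Fin t => (i : ℕ) < k), θ i ≤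
      ∑ i ∈ Finset.univ.filter (fun i : Fin n => (i : ℕ) < k),
        downOrd hH.eigenvalues i :=
  sum_theta_le_sum_largest_eigenvalues_general u hunit θ hpos A hA hH k hkn
end
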